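/- arXiv:1202.5782 — 6 statements merged into one kernel-verified Lean document; each statement's English description precedes it below -/
import Mathlib

section
/- Let M be a nonzero R-module. Then the following are equivalent: (a) M satisfies the (**) condition; (b) every nonzero submodule of M is a socle submodule of M, i.e., every nonzero submodule N of M equals the sum of all second submodules of M contained in N. -/
open Pointwise

variable (R M : Type*) [CommRing R] [AddCommGroup M] [Module R M]

/-- A nonzero submodule `S` is *second* if for every `r : R`, `r • S = S` or `r • S = ⊥`. -/
def IsSecondSubmodule (S : Submodule R M) : Prop :=
  S ≠ ⊥ ∧ ∀ r : R, r • S = S ∨ r • S = ⊥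

/-- The second spectrum of `M`: the collection of all second submodules of `M`. -/
def SecondSpec : Type _ := {S : Submodule R M // IsSecondSubmodule R M S}

/-- `V^{s*}(N)`: the set of second submodules contained in `N`. -/
def Vs (N : Submodule R M) : Set (SecondSpec R M) := {S | S.1 ≤ N}

/-- `W^s(N)`: the complement of `V^{s*}(N)` in `Spec^s(M)`. -/
def Ws (N : Submodule R M) : Set (SecondSpec R M) := (Vs R M N)ᶜ

/-- The second classical Zariski topology on `Spec^s(M)`, generated by the
sub-basis `{W^s(N) : N ≤ M}`. -/
instance secondZariski : TopologicalSpace (SecondSpec R M) :=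
  TopologicalSpace.generateFrom {U | ∃ N : Submodule R M, U = Ws R M N}

/-- The second socle of a submodule `N`: the sum of all second submodules of `M`
contained in `N`. -/
def secSocle (N : Submodule R M) : Submodule R M :=
  sSup {S : Submodule R M | IsSecondSubmodule R M S ∧ S ≤ N}

section

variable {R M}

theorem secSocle_le (N : Submodule R M) : secSocle R M N ≤ N :=
  sSup_le fun _ hS => hS.2

theorem secSocle_bot : secSocle R M ⊥ = ⊥ :=
  le_bot_iff.mp (secSocle_le ⊥)

theorem Vs_secSocle (N : Submodule R M) : Vs R M (secSocle R M N) = Vs R M N :=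
  Set.ext fun S =>
    ⟨fun hS => show S.1 ≤ N from le_trans hS (secSocle_le N),
      fun hS => show S.1 ≤ secSocle R M N from le_sSup ⟨S.2, hS⟩⟩

theorem secSocle_eq_of_Vs_eq {N₁ N₂ : Submodule R M} (hV : Vs R M N₁ = Vs R M N₂) :
    secSocle R M N₁ = secSocle R M N₂ := by
  unfold secSocle
  congr 1
  ext S
  exact and_congr_right fun hS => Set.ext_iff.mp hV ⟨S, hS⟩

end

theorem stmt0 :
    (∀ N₁ N₂ : Submodule R M, Vs R M N₁ = Vs R M N₂ → N₁ = N₂) ↔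
      (∀ N : Submodule R M, N ≠ ⊥ → N = secSocle R M N) := by
  refine ⟨fun h N _ => h N _ (Vs_secSocle N).symm, fun h N₁ N₂ hV => ?_⟩
  have socle_eq : ∀ N : Submodule R M, N = secSocle R M N := fun N => by
    by_cases hN : N = ⊥
    · rw [hN, secSocle_bot]
    · exact h N hN
  rw [socle_eq N₁, socle_eq N₂, secSocle_eq_of_Vs_eq hV]
end

section
/- Let M be an R-module. Then Spec^s(M), equipped with the second classical Zariski topology, is a T1-space if and only if S.dim(M) ≤ 0, that is, if and only if there do not exist second submodules S1, S2 of M with S1 strictly contained in S2. -/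
/-!
The sub-basic open sets `W^s(N)` are upward closed under inclusion, and `W^s(T)` separates `T`
from every second submodule not contained in `T`. Hence in `Spec^s(M)` the point `S` specializes to `T`
exactly when `T ⊆ S`, and a space is T1 exactly when its specialization relation is equality.
-/

open Pointwise

variable (R M : Type*) [CommRing R] [AddCommGroup M] [Module R M]

theorem specializes_generateFrom_iff {α : Type*} {g : Set (Set α)} {x y : α} :
    @Specializes α (TopologicalSpace.generateFrom g) x y ↔ ∀ s ∈ g, y ∈ s → x ∈ s := by
  let := TopologicalSpace.generateFrom g
  rw [specializes_iff_pure, ← Filter.tendsto_id', TopologicalSpace.tendsto_nhds_generateFrom_iff]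
  rfl

theorem SecondSpec.specializes_iff_le {S T : SecondSpec R M} : S ⤳ T ↔ T.1 ≤ S.1 := by
  rw [specializes_generateFrom_iff, ← forall_ge_iff_le]
  simp only [Set.mem_ofPred_eq, forall_exists_index, forall_eq_apply_imp_iff, Ws, Vs,
    Set.mem_compl_iff, not_imp_not]

/-- Thm 2.6: `Spec^s(M)` is a T1-space iff `S.dim M ≤ 0`, i.e. there are no second
submodules `S₁ ⊊ S₂` of `M`. -/
theorem stmt2 :
    T1Space (SecondSpec R M) ↔
      ¬ ∃ S₁ S₂ : Submodule R M,
          IsSecondSubmodule R M S₁ ∧ IsSecondSubmodule R M S₂ ∧ S₁ < S₂ := by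
  simp only [t1Space_iff_specializes_imp_eq, SecondSpec.specializes_iff_le]
  constructor
  · rintro h ⟨S₁, S₂, h₁, h₂, hlt⟩
    exact hlt.ne (congrArg Subtype.val (h (x := ⟨S₂, h₂⟩) (y := ⟨S₁, h₁⟩) hlt.le)).symm
  · intro h S T hTS
    by_contra hne
    exact h ⟨T.1, S.1, T.2, S.2, hTS.lt_of_ne fun hST ↦ hne (Subtype.ext hST.symm)⟩
end

section
/- Let R be a commutative Noetherian ring and M an R-module of finite length such that Spec^s(M), with the second classical Zariski topology, is a T1-space. Then M is a comultiplication R-module, i.e., every submodule N of M satisfies N = (0 :_M Ann_R(N)). -/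
/-!
A second submodule lies in the closure of every second submodule containing it, so in a T1
second spectrum there are no proper inclusions between second submodules. For a maximal ideal
`𝔪`, every nonzero submodule of `(0 :_M 𝔪)` is second, hence `(0 :_M 𝔪)` is spanned by each of
its nonzero elements. Consequently `Ann` turns a cover `N ⋖ N'` of submodules into an equality or
a cover of ideals (`r ↦ r • x` embeds `Ann N / Ann N'` into `(0 :_M (N :_R x))` for `x ∈ N' \ N`),
and dually `(0 :_M -)` turns covers of ideals into equalities or covers of submodules. So
`N ↦ (0 :_M Ann N)` is inflationary, fixes `0` and sends covers to covers or equalities; in a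
module of finite length, climbing a maximal chain shows it fixes every submodule.
-/

open Pointwise

variable (R M : Type*) [CommRing R] [AddCommGroup M] [Module R M]

open Submodule

section Order

variable {α : Type*} [PartialOrder α] [OrderBot α] [WellFoundedLT α] [WellFoundedGT α]

theorem apply_eq_self_of_le_apply_of_covBy {f : α → α} (hbot : f ⊥ = ⊥) (hle : ∀ x, x ≤ f x)
    (hcov : ∀ ⦃x y⦄, x ⋖ y → f x = f y ∨ f x ⋖ f y) (x : α) : f x = x := by
  induction x using WellFoundedLT.induction with
  | ind x ih =>
  rcases eq_bot_or_bot_lt x with rfl | hx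
  · exact hbot
  obtain ⟨y, -, hyx⟩ := exists_le_covBy_of_lt hx
  have hfy : f y = y := ih y hyx.lt
  rcases hcov hyx with hfyx | hfyx
  · exact absurd (by rw [← hfy, hfyx]; exact hle x) hyx.lt.not_ge
  · rw [hfy] at hfyx
    exact ((hfyx.eq_or_eq hyx.le (hle x)).resolve_left hyx.ne').symm

end Order

section

variable {R M}

theorem CovBy.sup_span_singleton_eq {N N' : Submodule R M} (h : N ⋖ N') {x : M} (hx : x ∈ N')
    (hxN : x ∉ N) : N ⊔ R ∙ x = N' :=
  (h.eq_or_eq le_sup_left (sup_le h.le ((span_singleton_le_iff_mem x _).2 hx))).resolve_left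
    fun e => hxN (e ▸ mem_sup_right (mem_span_singleton_self x))

theorem CovBy.colon_singleton_isMaximal {N N' : Submodule R M} (h : N ⋖ N') {x : M}
    (hx : x ∈ N') (hxN : x ∉ N) : (N.colon {x}).IsMaximal := by
  have : IsSimpleModule R (N' ⧸ N.comap N'.subtype) := (covBy_iff_quot_is_simple h.le).1 h
  set y : N' ⧸ N.comap N'.subtype := Submodule.Quotient.mk ⟨x, hx⟩
  have hy : y ≠ 0 := by simpa [y, Submodule.Quotient.mk_eq_zero] using hxN
  have hker : N.colon {x} = LinearMap.ker (LinearMap.toSpanSingleton R _ y) := by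
    ext r
    simp [y, ← Submodule.Quotient.mk_smul, Submodule.Quotient.mk_eq_zero]
  rw [hker]
  exact IsSimpleModule.ker_toSpanSingleton_isMaximal R hy

theorem inf_ker_eq_or_covBy {X : Type*} [AddCommGroup X] [Module R X] {P : Submodule R M}
    (hP : ∀ u ∈ P, u ≠ 0 → R ∙ u = P) (φ : X →ₗ[R] M) {A : Submodule R X} (hA : A.map φ ≤ P) :
    A ⊓ LinearMap.ker φ = A ∨ A ⊓ LinearMap.ker φ ⋖ A := by
  by_cases hker : A ≤ LinearMap.ker φ
  · exact Or.inl (inf_eq_left.2 hker)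
  refine Or.inr ⟨inf_lt_left.2 hker, fun B hB hBA => hBA.not_ge fun a ha => ?_⟩
  obtain ⟨b, hb, hbA⟩ := SetLike.exists_of_lt hB
  have hbA' : b ∈ A := hBA.le hb
  have hφb : φ b ≠ 0 := fun h => hbA ⟨hbA', h⟩
  have hφa : φ a ∈ R ∙ φ b := (hP _ (hA ⟨b, hbA', rfl⟩) hφb).symm ▸ hA ⟨a, ha, rfl⟩
  obtain ⟨c, hc⟩ := mem_span_singleton.1 hφa
  have hsub : a - c • b ∈ B :=
    hB.le ⟨A.sub_mem ha (A.smul_mem c hbA'), by simp [LinearMap.mem_ker, hc]⟩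
  simpa using B.add_mem hsub (B.smul_mem c hb)

theorem torsionBySet_sup (I J : Ideal R) :
    torsionBySet R M ↑(I ⊔ J) = torsionBySet R M I ⊓ torsionBySet R M J :=
  (torsion_gc R M).u_inf (b₁ := OrderDual.toDual I) (b₂ := OrderDual.toDual J)

theorem SecondSpec.eq_of_le [T1Space (SecondSpec R M)] {S T : SecondSpec R M} (hST : S.1 ≤ T.1) :
    S = T := by
  have hTS : T ⤳ S := by
    rw [specializes_iff_nhds, TopologicalSpace.nhds_generateFrom,
      TopologicalSpace.nhds_generateFrom]
    refine le_iInf₂ fun U ⟨hSU, N, hU⟩ => iInf₂_le U ⟨?_, N, hU⟩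
    subst hU
    exact fun hTN => hSU (hST.trans hTN)
  exact hTS.eq.symm

theorem isSecondSubmodule_of_le_torsionBySet {m : Ideal R} (hm : m.IsMaximal)
    {P : Submodule R M} (hP : P ≤ torsionBySet R M m) (hP0 : P ≠ ⊥) : IsSecondSubmodule R M P := by
  refine ⟨hP0, fun r => ?_⟩
  by_cases hr : r ∈ m
  · refine Or.inr <| eq_bot_iff.2 <| map_le_iff_le_comap.2 fun x hx => ?_
    exact (mem_torsionBySet_iff _ _).1 (hP hx) ⟨r, hr⟩
  · obtain ⟨s, i, hi, hsi⟩ := hm.exists_inv hr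
    refine Or.inl <| le_antisymm (smul_le_self_of_tower r P) fun x hx => ?_
    have hx' : x = r • s • x := by
      calc x = (s * r + i) • x := by rw [hsi, one_smul]
        _ = r • s • x := by
          rw [add_smul, (mem_torsionBySet_iff _ _).1 (hP hx) ⟨i, hi⟩, add_zero, mul_comm, mul_smul]
    exact hx' ▸ smul_mem_pointwise_smul _ r P (P.smul_mem s hx)

theorem span_singleton_eq_torsionBySet [T1Space (SecondSpec R M)] {m : Ideal R}
    (hm : m.IsMaximal) {u : M} (hu : u ∈ torsionBySet R M m) (hu0 : u ≠ 0) :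
    R ∙ u = torsionBySet R M m := by
  have hle : R ∙ u ≤ torsionBySet R M m := (span_singleton_le_iff_mem u _).2 hu
  have hu_second := isSecondSubmodule_of_le_torsionBySet hm hle (by simpa using hu0)
  have hm_second := isSecondSubmodule_of_le_torsionBySet hm le_rfl
    ((Submodule.ne_bot_iff _).2 ⟨u, hu, hu0⟩)
  exact congrArg Subtype.val <|
    SecondSpec.eq_of_le (S := ⟨_, hu_second⟩) (T := ⟨_, hm_second⟩) hle

theorem annihilator_eq_or_covBy_of_covBy [T1Space (SecondSpec R M)] {N N' : Submodule R M}
    (h : N ⋖ N') : N'.annihilator = N.annihilator ∨ N'.annihilator ⋖ N.annihilator := by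
  obtain ⟨x, hx, hxN⟩ := SetLike.exists_of_lt h.lt
  have hann :
      N.annihilator ⊓ LinearMap.ker (LinearMap.toSpanSingleton R M x) = N'.annihilator := by
    rw [← h.sup_span_singleton_eq hx hxN, annihilator_sup, annihilator_span_singleton]
  have hmap : Submodule.map (LinearMap.toSpanSingleton R M x) N.annihilator ≤
      torsionBySet R M (N.colon {x}) := by
    rintro _ ⟨r, hr, rfl⟩
    refine (mem_torsionBySet_iff _ _).2 fun ⟨w, hw⟩ => ?_
    simp only [LinearMap.toSpanSingleton_apply]
    rw [smul_comm, mem_annihilator.1 hr _ (mem_colon_singleton.1 hw)]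
  rw [← hann]
  exact inf_ker_eq_or_covBy
    (fun u hu hu0 => span_singleton_eq_torsionBySet (h.colon_singleton_isMaximal hx hxN) hu hu0)
    _ hmap

theorem torsionBySet_eq_or_covBy_of_covBy [T1Space (SecondSpec R M)] {I I' : Ideal R}
    (h : I ⋖ I') : torsionBySet R M I' = torsionBySet R M I ∨
      torsionBySet R M I' ⋖ torsionBySet R M I := by
  obtain ⟨r, hr, hrI⟩ := SetLike.exists_of_lt h.lt
  have htors : torsionBySet R M I ⊓ LinearMap.ker (DistribSMul.toLinearMap R M r) =
      torsionBySet R M I' := by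
    rw [← h.sup_span_singleton_eq hr hrI, torsionBySet_sup, torsionBySet_span_singleton_eq]
    rfl
  have hmap : (torsionBySet R M I).map (DistribSMul.toLinearMap R M r) ≤
      torsionBySet R M (I.colon {r}) := by
    rintro _ ⟨x, hx, rfl⟩
    refine (mem_torsionBySet_iff _ _).2 fun ⟨w, hw⟩ => ?_
    rw [DistribSMul.toLinearMap_apply, smul_smul]
    exact (mem_torsionBySet_iff _ _).1 hx ⟨_, mem_colon_singleton.1 hw⟩
  rw [← htors]
  exact inf_ker_eq_or_covBy
    (fun u hu hu0 => span_singleton_eq_torsionBySet (h.colon_singleton_isMaximal hr hrI) hu hu0)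
    _ hmap

theorem torsionBySet_annihilator_eq_or_covBy [T1Space (SecondSpec R M)] {N N' : Submodule R M}
    (h : N ⋖ N') : torsionBySet R M N.annihilator = torsionBySet R M N'.annihilator ∨
      torsionBySet R M N.annihilator ⋖ torsionBySet R M N'.annihilator := by
  rcases annihilator_eq_or_covBy_of_covBy h with hann | hann
  · exact Or.inl (by rw [hann])
  · exact torsionBySet_eq_or_covBy_of_covBy hann

end

theorem stmt3 (hfl : IsFiniteLength R M)
    (hT1 : T1Space (SecondSpec R M)) :
    ∀ N : Submodule R M, (N : Set M) = {m : M | ∀ r ∈ N.annihilator, r • m = (0 : M)} := by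
  obtain ⟨_, _⟩ := isFiniteLength_iff_isNoetherian_isArtinian.mp hfl
  have hfix : ∀ N : Submodule R M, torsionBySet R M N.annihilator = N :=
    apply_eq_self_of_le_apply_of_covBy (f := fun N => torsionBySet R M N.annihilator)
      (by simp only [annihilator_bot, top_coe, torsionBySet_univ]) (torsion_gc R M).le_u_l
      fun _ _ => torsionBySet_annihilator_eq_or_covBy
  intro N
  conv_lhs => rw [← hfix N]
  ext x
  exact (mem_torsionBySet_iff _ _).trans Subtype.forall
end

section
/- Let M be an R-module and suppose that either R is an Artinian ring or M is a Noetherian R-module. Then M has a minimal (nonzero) submodule if and only if M has a second submodule. Moreover, in this situation every second submodule of M is a semisimple R-module. -/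
open Pointwise

variable (R M : Type*) [CommRing R] [AddCommGroup M] [Module R M]

/-!
A second submodule `S` has prime annihilator `p`, because every `r ∉ p` satisfies `r • S = S`.
If `R` is Artinian, `p` is therefore maximal. If `M` is Noetherian, `S` has a simple quotient
`S ⧸ N`, and `r • S = S` forces `r • (S ⧸ N) ≠ 0` for `r ∉ p`, so `p` is the (maximal) annihilator
of `S ⧸ N`. Either way `S` is a vector space over the field `R ⧸ p`, hence semisimple, and so it
contains a simple submodule. Conversely, a simple submodule is second since `r • S ≤ S`.
-/

theorem isSemisimpleModule_of_isMaximal_annihilator {R N : Type*} [CommRing R] [AddCommGroup N]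
    [Module R N] (h : (Module.annihilator R N).IsMaximal) : IsSemisimpleModule R N := by
  let := Ideal.Quotient.field (Module.annihilator R N)
  let := (Module.isTorsionBySet_annihilator R N).module
  exact (Module.isTorsionBySet_annihilator R N).isSemisimpleModule_iff.mp inferInstance

section

variable {R M} {S : Submodule R M}

theorem Submodule.pointwise_smul_eq_bot_iff (r : R) : r • S = ⊥ ↔ r ∈ S.annihilator := by
  simp only [eq_bot_iff, SetLike.le_def, mem_smul_pointwise_iff_exists, mem_bot,
    mem_annihilator]
  constructor
  · exact fun h x hx => h ⟨x, hx, rfl⟩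
  · rintro h _ ⟨x, hx, rfl⟩
    exact h x hx

theorem IsAtom.isSecondSubmodule (hS : IsAtom S) : IsSecondSubmodule R M S :=
  ⟨hS.1, fun r => (Submodule.smul_le_self_of_tower r S).eq_or_lt.imp id (hS.2 _)⟩

namespace IsSecondSubmodule

theorem smul_eq_self (hS : IsSecondSubmodule R M S) {r : R} (hr : r ∉ S.annihilator) :
    r • S = S :=
  (hS.2 r).resolve_right fun h => hr ((Submodule.pointwise_smul_eq_bot_iff r).mp h)

theorem mem_annihilator_of_smul_le (hS : IsSecondSubmodule R M S) {N : Submodule R M}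
    (hSN : ¬S ≤ N) {r : R} (hr : r • S ≤ N) : r ∈ S.annihilator := by
  by_contra hr'
  exact hSN (hS.smul_eq_self hr' ▸ hr)

theorem annihilator_isPrime (hS : IsSecondSubmodule R M S) : S.annihilator.IsPrime := by
  refine Ideal.isPrime_iff.mpr ⟨fun h => hS.1 (Submodule.annihilator_eq_top_iff.mp h), ?_⟩
  intro r s hrs
  by_contra! hne
  have : (r * s) • S = S := by rw [mul_smul, hS.smul_eq_self hne.2, hS.smul_eq_self hne.1]
  exact hS.1 (this ▸ (Submodule.pointwise_smul_eq_bot_iff _).mpr hrs)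

theorem annihilator_isMaximal_of_isNoetherian [IsNoetherian R M]
    (hS : IsSecondSubmodule R M S) : S.annihilator.IsMaximal := by
  have : Nontrivial S := Submodule.nontrivial_iff_ne_bot.mpr hS.1
  obtain ⟨N, hN⟩ := IsCoatomic.exists_coatom (Submodule R S)
  have : IsSimpleModule R (S ⧸ N) := isSimpleModule_iff_isCoatom.mpr hN
  have hmax := IsSimpleModule.annihilator_isMaximal (R := R) (M := S ⧸ N)
  suffices Module.annihilator R (S ⧸ N) = S.annihilator from this ▸ hmax
  refine le_antisymm (fun r hr => hS.mem_annihilator_of_smul_le (N := N.map S.subtype) ?_ ?_)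
    (LinearMap.annihilator_le_of_surjective _ N.mkQ_surjective)
  · intro hSN
    refine hN.1 (eq_top_iff.mpr fun x _ => ?_)
    obtain ⟨y, hy, hxy⟩ := hSN x.2
    rwa [← Subtype.ext hxy]
  · rintro _ ⟨x, hx, rfl⟩
    refine ⟨r • ⟨x, hx⟩, ?_, rfl⟩
    change r • (⟨x, hx⟩ : S) ∈ N
    rw [← Submodule.Quotient.mk_eq_zero, Submodule.Quotient.mk_smul]
    exact Module.mem_annihilator.mp hr _

theorem annihilator_isMaximal (h : IsArtinianRing R ∨ IsNoetherian R M)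
    (hS : IsSecondSubmodule R M S) : S.annihilator.IsMaximal := by
  rcases h with _ | _
  · exact hS.annihilator_isPrime.isMaximal'
  · exact hS.annihilator_isMaximal_of_isNoetherian

end IsSecondSubmodule

end

/-- Thm 2.11: If `R` is Artinian or `M` is Noetherian, then `M` has a minimal submodule
iff `M` has a second submodule; moreover every second submodule of `M` is semisimple. -/
theorem stmt4 (h : IsArtinianRing R ∨ IsNoetherian R M) :
    ((∃ S : Submodule R M, IsAtom S) ↔ (∃ S : Submodule R M, IsSecondSubmodule R M S)) ∧
      (∀ S : Submodule R M, IsSecondSubmodule R M S → IsSemisimpleModule R S) := by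
  have semisimple : ∀ S : Submodule R M, IsSecondSubmodule R M S → IsSemisimpleModule R S :=
    fun S hS => isSemisimpleModule_of_isMaximal_annihilator (hS.annihilator_isMaximal h)
  refine ⟨⟨fun ⟨S, hS⟩ => ⟨S, hS.isSecondSubmodule⟩, fun ⟨S, hS⟩ => ?_⟩, semisimple⟩
  have := semisimple S hS
  obtain ⟨T, -, hT⟩ := (IsSemisimpleModule.eq_bot_or_exists_simple_le S).resolve_left hS.1
  exact ⟨T, isSimpleModule_iff_isAtom.mp hT⟩
end

section
/- Let M be an R-module such that Spec^s(M) is a finite set. Then the following are equivalent for Spec^s(M) with the second classical Zariski topology: (a) it is a Hausdorff space; (b) it is a T1-space; (c) it is the cofinite topology; (d) it is discrete; (e) S.dim(M) ≤ 0, i.e., there are no two second submodules S1 ⊊ S2 of M. -/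
open Pointwise

variable (R M : Type*) [CommRing R] [AddCommGroup M] [Module R M]

/-!
The specialization preorder of the second classical Zariski topology is reverse
inclusion, `S ⤳ T ↔ T ≤ S`, because the sub-basic open sets `W^s(N)` are upward closed and
`W^s(S)` separates `S` from everything not contained in it. So the space is T1 exactly when
no two second submodules are strictly nested, and a finite T1 space is discrete.
-/

namespace SecondSpec

variable {R M}

theorem isOpen_Ws (N : Submodule R M) : IsOpen (Ws R M N) :=
  TopologicalSpace.isOpen_generateFrom_of_mem ⟨N, rfl⟩

theorem specializes_iff {S T : SecondSpec R M} : S ⤳ T ↔ T.1 ≤ S.1 := by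
  constructor
  · intro h
    by_contra hTS
    exact specializes_iff_forall_open.mp h _ (isOpen_Ws S.1) hTS (le_refl S.1)
  · intro hTS
    simp only [specializes_iff_nhds, TopologicalSpace.nhds_generateFrom]
    refine le_iInf₂ fun U ⟨hTU, N, hU⟩ => ?_
    subst hU
    exact iInf₂_le _ ⟨fun hSN => hTU (hTS.trans hSN), N, rfl⟩

theorem t1Space_iff :
    T1Space (SecondSpec R M) ↔
      ¬ ∃ S₁ S₂ : Submodule R M, IsSecondSubmodule R M S₁ ∧ IsSecondSubmodule R M S₂ ∧ S₁ < S₂ := by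
  rw [t1Space_iff_specializes_imp_eq]
  constructor
  · rintro h ⟨S₁, S₂, h₁, h₂, hlt⟩
    have : (⟨S₂, h₂⟩ : SecondSpec R M) = ⟨S₁, h₁⟩ := h (specializes_iff.mpr hlt.le)
    exact hlt.ne' (congrArg Subtype.val this)
  · intro h S T hST
    refine Subtype.ext ((specializes_iff.mp hST).eq_of_not_lt fun hlt => ?_).symm
    exact h ⟨T.1, S.1, T.2, S.2, hlt⟩

end SecondSpec

/-- Cor 2.14: for a module with finite second spectrum, Hausdorff, T1, cofinite,
discrete, and `S.dim M ≤ 0` are all equivalent for `Spec^s(M)`. -/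
theorem stmt7 (hfin : Finite (SecondSpec R M)) :
    List.TFAE
      [ T2Space (SecondSpec R M),
        T1Space (SecondSpec R M),
        (∀ U : Set (SecondSpec R M), IsOpen U ↔ (U = ∅ ∨ Uᶜ.Finite)),
        DiscreteTopology (SecondSpec R M),
        ¬ ∃ S₁ S₂ : Submodule R M,
            IsSecondSubmodule R M S₁ ∧ IsSecondSubmodule R M S₂ ∧ S₁ < S₂ ] := by
  tfae_have 1 → 2 := fun _ => inferInstance
  tfae_have 2 → 4 := fun _ => Finite.instDiscreteTopology
  tfae_have 4 → 1 := fun _ => inferInstance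
  tfae_have 3 ↔ 4 := by
    simp only [discreteTopology_iff_forall_isOpen, Set.toFinite, or_true, iff_true]
  tfae_have 2 ↔ 5 := SecondSpec.t1Space_iff
  tfae_finish
end

section
/- Let M be an R-module, let soc(M) be the sum of all second submodules of M, and let I_M = Ann_R(soc(M)). Then for every second submodule S of M, Ann_R(S) is a prime ideal of R containing I_M, and the natural map ψ : Spec^s(M) → Spec(R/I_M) given by ψ(S) = Ann_R(S)/I_M is continuous, where Spec^s(M) carries the second classical Zariski topology and Spec(R/I_M) carries the Zariski topology. -/
open Pointwise

variable (R M : Type*) [CommRing R] [AddCommGroup M] [Module R M]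

/-!
Since `r • S` is `S` or `0`, an element outside `Ann S` acts on `S` surjectively, which makes
`Ann S` prime. The map `S ↦ Ann S` into `Spec R` is continuous: the preimage of `V(s)` is the set of
second submodules contained in the `s`-torsion submodule, a closed set. Every second submodule lies
in `soc M`, so `Ann S ⊇ I_M`, and `ψ` is this map followed by the inverse of the closed embedding
`Spec(R/I_M) → Spec R`.
-/

namespace Submodule

variable {R M : Type*} [CommRing R] [AddCommGroup M] [Module R M]

theorem pointwise_smul_eq_bot_iff_s12 {r : R} {S : Submodule R M} :
    r • S = ⊥ ↔ r ∈ S.annihilator := by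
  rw [eq_bot_iff, pointwise_smul_def, map_le_iff_le_comap, mem_annihilator]
  rfl

end Submodule

section

variable {R M}

theorem IsSecondSubmodule.annihilator_isPrime_s12 {S : Submodule R M}
    (hS : IsSecondSubmodule R M S) : S.annihilator.IsPrime := by
  refine ⟨mt Submodule.annihilator_eq_top_iff.mp hS.1, fun {a b} hab => ?_⟩
  refine (hS.2 a).symm.imp Submodule.pointwise_smul_eq_bot_iff_s12.mp fun haS => ?_
  rw [← Submodule.pointwise_smul_eq_bot_iff_s12, ← haS, smul_smul, mul_comm,
    Submodule.pointwise_smul_eq_bot_iff_s12]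
  exact hab

theorem IsSecondSubmodule.annihilator_secSocle_le {S N : Submodule R M}
    (hS : IsSecondSubmodule R M S) (hSN : S ≤ N) :
    (secSocle R M N).annihilator ≤ S.annihilator :=
  Submodule.annihilator_mono (le_sSup ⟨hS, hSN⟩)

theorem isClosed_Vs (N : Submodule R M) : IsClosed (Vs R M N) := by
  rw [← compl_compl (Vs R M N)]
  exact (TopologicalSpace.isOpen_generateFrom_of_mem ⟨N, rfl⟩ : IsOpen (Ws R M N)).isClosed_compl

namespace SecondSpec

def annihilator (S : SecondSpec R M) : PrimeSpectrum R :=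
  ⟨S.1.annihilator, S.2.annihilator_isPrime_s12⟩

theorem preimage_zeroLocus_annihilator (s : Set R) :
    annihilator ⁻¹' PrimeSpectrum.zeroLocus s = Vs R M (Submodule.torsionBySet R M s) := by
  ext S
  simp only [Set.mem_preimage, PrimeSpectrum.mem_zeroLocus, Vs, Set.mem_ofPred_eq,
    annihilator, SetLike.le_def, Set.subset_def, SetLike.mem_coe, Submodule.mem_annihilator,
    Submodule.mem_torsionBySet_iff, Subtype.forall]
  exact forall₂_comm

theorem continuous_annihilator : Continuous (annihilator (R := R) (M := M)) := by
  refine continuous_iff_isClosed.mpr fun Z hZ => ?_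
  obtain ⟨s, rfl⟩ := (PrimeSpectrum.isClosed_iff_zeroLocus Z).mp hZ
  rw [preimage_zeroLocus_annihilator]
  exact isClosed_Vs _

def annihilatorQuotient (S : SecondSpec R M) :
    PrimeSpectrum (R ⧸ (secSocle R M ⊤).annihilator) :=
  ⟨S.annihilator.asIdeal.map (Ideal.Quotient.mk _),
    Ideal.map_isPrime_of_surjective Ideal.Quotient.mk_surjective
      (Ideal.mk_ker.trans_le (S.2.annihilator_secSocle_le le_top))⟩

theorem comap_annihilatorQuotient (S : SecondSpec R M) :
    PrimeSpectrum.comap (Ideal.Quotient.mk _) S.annihilatorQuotient = S.annihilator := by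
  ext1
  rw [PrimeSpectrum.comap_asIdeal, annihilatorQuotient,
    Ideal.comap_map_of_surjective' _ Ideal.Quotient.mk_surjective, Ideal.mk_ker]
  exact sup_eq_left.mpr (S.2.annihilator_secSocle_le le_top)

theorem continuous_annihilatorQuotient :
    Continuous (annihilatorQuotient (R := R) (M := M)) := by
  rw [(PrimeSpectrum.isClosedEmbedding_comap_of_surjective _ _
    Ideal.Quotient.mk_surjective).isInducing.continuous_iff]
  exact continuous_annihilator.congr fun S => (comap_annihilatorQuotient S).symm

end SecondSpec

end

/-- Prop 3.7: with `I_M = Ann_R(soc M)`, the annihilator of each second submodule is a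
prime ideal containing `I_M`, and the natural map
`ψ : Spec^s(M) → Spec(R/I_M)`, `ψ(S) = Ann_R(S)/I_M`, is continuous. -/
theorem stmt12 :
    (∀ S : SecondSpec R M,
        (Submodule.annihilator S.1).IsPrime ∧
          Submodule.annihilator (secSocle R M ⊤) ≤ Submodule.annihilator S.1) ∧
      ∃ ψ : SecondSpec R M →
          PrimeSpectrum (R ⧸ Submodule.annihilator (secSocle R M ⊤)),
        (∀ S : SecondSpec R M,
          (ψ S).asIdeal =
            Ideal.map (Ideal.Quotient.mk (Submodule.annihilator (secSocle R M ⊤)))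
              (Submodule.annihilator S.1)) ∧
        Continuous ψ := by
  refine ⟨fun S => ⟨S.2.annihilator_isPrime_s12, S.2.annihilator_secSocle_le le_top⟩,
    SecondSpec.annihilatorQuotient, fun _ => rfl, SecondSpec.continuous_annihilatorQuotient⟩
end
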